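/- arXiv:quant-ph/0404090 — 2 statements merged into one kernel-verified Lean document; each statement's English description precedes it below -/
import Mathlib

section
/- Stirling-type asymptotic: for fixed natural number n and with 2j = A² + O(A), as A → ∞, A^{2j−n}/√((2j−n)!) = (4πj)^{-1/4} · e^{A²/2 − (2j−A²)²/(4A²)} · (1 + o(1)). -/
/-!
Write `m = J - n`. By Stirling's formula, `A^m / √(m!)` divided by the right-hand side equals
`√(√π / stirlingSeq m) · (1 + n/m)^{1/4} · exp E`, where the first two factors tend to `1` as
`m → ∞`. With `B = A² - m = O(A)`, expanding `log (A²/m) = log (1 + B/m)` to second order shows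
that the exponent `E` is `O(1/A)`. Encoding the range `|J - A²| ≤ C·A`, `A → ∞` as a filter on
pairs `(A, m)`, the theorem becomes an asymptotic equivalence along that filter.
-/

open Filter Topology Real Asymptotics
open scoped Nat

noncomputable section

def stirlingProfile (A J : ℝ) : ℝ :=
  (4 * π * (J / 2)) ^ (-(1 / 4) : ℝ) * exp (A ^ 2 / 2 - (J - A ^ 2) ^ 2 / (4 * A ^ 2))

def stirlingExponent (n A x : ℝ) : ℝ :=
  x / 2 * (log (A ^ 2 / x) + 1) - A ^ 2 / 2 + (x + n - A ^ 2) ^ 2 / (4 * A ^ 2)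

-- The pair `(A, m)` stands for `(A, J - n)`.
def stirlingWindow (n : ℕ) (C : ℝ) : Filter (ℝ × ℕ) :=
  comap Prod.fst atTop ⊓ 𝓟 {p | |((p.2 + n : ℕ) : ℝ) - p.1 ^ 2| ≤ C * p.1}

end

lemma stirlingProfile_nonneg (A : ℝ) {J : ℝ} (hJ : 0 ≤ J) : 0 ≤ stirlingProfile A J := by
  unfold stirlingProfile; positivity

lemma stirlingProfile_pos (A : ℝ) {J : ℝ} (hJ : 0 < J) : 0 < stirlingProfile A J := by
  unfold stirlingProfile; positivity

lemma pow_div_sqrt_factorial_eq {A : ℝ} (hA : 0 < A) (n : ℕ) {m : ℕ} (hm : m ≠ 0) :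
    A ^ m / √(m ! : ℝ) = stirlingProfile A (m + n) *
      (√(√π / Stirling.stirlingSeq m) * (1 + n / m : ℝ) ^ (1 / 4 : ℝ) *
        exp (stirlingExponent n A m)) := by
  have hm0 : (0 : ℝ) < m := by positivity
  have hmn : (0 : ℝ) < m + n := by positivity
  have hs : 0 < Stirling.stirlingSeq m :=
    (Stirling.sqrt_pi_le_stirlingSeq hm).trans_lt' (by positivity)
  have hfact : (m ! : ℝ) = Stirling.stirlingSeq m * (√(2 * m) * (m / exp 1) ^ m) := by
    rw [Stirling.stirlingSeq, div_mul_cancel₀]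
    positivity
  have hlog_lhs : log (A ^ m / √(m ! : ℝ)) = m * log A -
      (log (Stirling.stirlingSeq m) + (log 2 + log m) / 2 + m * (log m - 1)) / 2 := by
    rw [log_div (by positivity) (by positivity), log_pow, log_sqrt (by positivity), hfact,
      log_mul hs.ne' (by positivity), log_mul (by positivity) (by positivity),
      log_sqrt (by positivity), log_mul two_ne_zero hm0.ne', log_pow,
      log_div hm0.ne' (exp_ne_zero 1), log_exp, add_assoc]
  have hlog_profile : log (stirlingProfile A (m + n)) = -(log 2 + log π + log (m + n)) / 4 +
      (A ^ 2 / 2 - (m + n - A ^ 2) ^ 2 / (4 * A ^ 2)) := by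
    rw [stirlingProfile, log_mul (by positivity) (exp_ne_zero _), log_exp,
      log_rpow (by positivity), show 4 * π * ((m + n) / 2) = 2 * (π * (m + n)) by ring,
      log_mul two_ne_zero (by positivity), log_mul pi_ne_zero hmn.ne']
    ring
  have hlog_stirlingSeq : log √(√π / Stirling.stirlingSeq m) =
      (log π / 2 - log (Stirling.stirlingSeq m)) / 2 := by
    rw [log_sqrt (by positivity), log_div (by positivity) hs.ne', log_sqrt pi_pos.le]
  have hlog_ratio : log ((1 + n / m : ℝ) ^ (1 / 4 : ℝ)) = (log (m + n) - log m) / 4 := by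
    rw [log_rpow (by positivity), one_add_div hm0.ne', log_div hmn.ne' hm0.ne']
    ring
  have hlog_exponent : log (A ^ 2 / m) = 2 * log A - log m := by
    rw [log_div (by positivity) hm0.ne', log_pow]
    push_cast
    ring
  refine log_injOn_pos (Set.mem_Ioi.2 (by positivity))
    (Set.mem_Ioi.2 (mul_pos (stirlingProfile_pos A hmn) (by positivity))) ?_
  rw [log_mul (stirlingProfile_pos A hmn).ne' (by positivity), log_mul (by positivity)
    (exp_ne_zero _), log_mul (by positivity) (by positivity), log_exp, hlog_lhs, hlog_profile,
    hlog_stirlingSeq, hlog_ratio, stirlingExponent, hlog_exponent]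
  ring

lemma abs_log_one_add_sub_add_sq_div_two_le {x : ℝ} (hx : |x| ≤ 1 / 2) :
    |log (1 + x) - x + x ^ 2 / 2| ≤ 2 * |x| ^ 3 := by
  have h := abs_log_sub_add_sum_range_le (x := -x) (by rw [abs_neg]; linarith) 2
  norm_num [Finset.sum_range_succ] at h
  rw [show log (1 + x) - x + x ^ 2 / 2 = -x + x ^ 2 / 2 + log (1 + x) by ring]
  refine h.trans ?_
  rw [div_le_iff₀ (by linarith)]
  nlinarith [pow_nonneg (abs_nonneg x) 3]

lemma stirlingExponent_eq (n : ℝ) {A x : ℝ} (hA : A ≠ 0) (hx : x ≠ 0) :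
    stirlingExponent n A x =
      x / 2 * (log (1 + (A ^ 2 - x) / x) - (A ^ 2 - x) / x + ((A ^ 2 - x) / x) ^ 2 / 2) +
        (n ^ 2 - 2 * n * (A ^ 2 - x)) / (4 * A ^ 2) - (A ^ 2 - x) ^ 3 / (4 * A ^ 2 * x) := by
  rw [stirlingExponent, show A ^ 2 / x = 1 + (A ^ 2 - x) / x by field_simp; ring]
  field_simp
  ring

lemma abs_stirlingExponent_le {n c A x : ℝ} (hc : 0 ≤ c) (hA : 4 * c + 1 ≤ A)
    (hx : A ^ 2 / 2 ≤ x) (hB : |A ^ 2 - x| ≤ c * A) :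
    |stirlingExponent n A x| ≤ (5 * c ^ 3 + n ^ 2 + |n| * c) / A := by
  have hA0 : 0 < A := by linarith
  have hx0 : 0 < x := lt_of_lt_of_le (by positivity) hx
  set B := A ^ 2 - x
  have hBx : |B / x| ≤ 2 * c / A := by
    rw [abs_div, abs_of_pos hx0, div_le_div_iff₀ hx0 hA0]
    nlinarith
  have hBx_half : |B / x| ≤ 1 / 2 :=
    hBx.trans (by rw [div_le_div_iff₀ hA0 two_pos]; linarith)
  have hB3 : |B| ^ 3 ≤ c ^ 3 * A ^ 3 := by
    rw [← mul_pow]; exact pow_le_pow_left₀ (abs_nonneg B) hB 3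
  have hlog : |x / 2 * (log (1 + B / x) - B / x + (B / x) ^ 2 / 2)| ≤ 4 * c ^ 3 / A :=
    calc _ ≤ x / 2 * (2 * |B / x| ^ 3) := by
          rw [abs_mul, abs_of_pos (half_pos hx0)]
          gcongr
          exact abs_log_one_add_sub_add_sq_div_two_le hBx_half
      _ = |B| ^ 3 / x ^ 2 := by rw [abs_div, abs_of_pos hx0]; field_simp
      _ ≤ c ^ 3 * A ^ 3 / (A ^ 2 / 2) ^ 2 := by gcongr
      _ = 4 * c ^ 3 / A := by field_simp; ring
  have hlinear : |(n ^ 2 - 2 * n * B) / (4 * A ^ 2)| ≤ (n ^ 2 + |n| * c) / A := by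
    have hA2 : 0 < 4 * A ^ 2 := by positivity
    rw [abs_div, abs_of_pos hA2, div_le_div_iff₀ hA2 hA0]
    have : |n ^ 2 - 2 * n * B| ≤ n ^ 2 + 2 * |n| * (c * A) := by
      refine (abs_sub _ _).trans ?_
      rw [abs_of_nonneg (sq_nonneg n), abs_mul, abs_mul, abs_two]
      gcongr
    have hA1 : 1 ≤ A := by linarith
    nlinarith [mul_le_mul_of_nonneg_right this hA0.le, mul_nonneg (sq_nonneg n) (sub_nonneg.2 hA1),
      mul_nonneg (abs_nonneg n) hc]
  have hcubic : |B ^ 3 / (4 * A ^ 2 * x)| ≤ c ^ 3 / A := by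
    rw [abs_div, abs_of_pos (by positivity : 0 < 4 * A ^ 2 * x), abs_pow]
    calc _ ≤ c ^ 3 * A ^ 3 / (4 * A ^ 2 * (A ^ 2 / 2)) := by gcongr
      _ = c ^ 3 / (2 * A) := by field_simp; ring
      _ ≤ c ^ 3 / A := by gcongr; linarith
  rw [stirlingExponent_eq n hA0.ne' hx0.ne']
  calc _ ≤ 4 * c ^ 3 / A + (n ^ 2 + |n| * c) / A + c ^ 3 / A :=
        (abs_sub _ _).trans (add_le_add ((abs_add_le _ _).trans (add_le_add hlog hlinear)) hcubic)
    _ = (5 * c ^ 3 + n ^ 2 + |n| * c) / A := by ring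

section stirlingWindow

variable {n : ℕ} {C : ℝ}

lemma tendsto_fst_stirlingWindow : Tendsto Prod.fst (stirlingWindow n C) atTop :=
  tendsto_comap.mono_left inf_le_left

lemma eventually_abs_sq_sub_le_stirlingWindow :
    ∀ᶠ p in stirlingWindow n C, |p.1 ^ 2 - (p.2 : ℝ)| ≤ (C + n) * p.1 := by
  filter_upwards [mem_inf_of_right (mem_principal_self _),
    tendsto_fst_stirlingWindow.eventually_ge_atTop 1] with p hp hA
  simp only [Nat.cast_add] at hp
  rw [abs_le] at hp ⊢
  constructor <;> nlinarith [(n.cast_nonneg : (0 : ℝ) ≤ n)]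

lemma eventually_sq_div_two_le_stirlingWindow :
    ∀ᶠ p in stirlingWindow n C, p.1 ^ 2 / 2 ≤ (p.2 : ℝ) := by
  filter_upwards [eventually_abs_sq_sub_le_stirlingWindow,
    tendsto_fst_stirlingWindow.eventually_ge_atTop 0,
    tendsto_fst_stirlingWindow.eventually_ge_atTop (2 * (C + n))] with p hp hA₀ hA
  nlinarith [le_abs_self (p.1 ^ 2 - p.2)]

lemma tendsto_snd_stirlingWindow : Tendsto Prod.snd (stirlingWindow n C) atTop := by
  refine tendsto_natCast_atTop_iff.1 (tendsto_atTop_mono' _ ?_ tendsto_fst_stirlingWindow)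
  filter_upwards [eventually_sq_div_two_le_stirlingWindow,
    tendsto_fst_stirlingWindow.eventually_ge_atTop 2] with p hp hA
  nlinarith

lemma exists_forall_of_eventually_stirlingWindow {P : ℝ × ℕ → Prop}
    (h : ∀ᶠ p in stirlingWindow n C, P p) :
    ∃ A₀, ∀ A, A₀ ≤ A → ∀ m : ℕ, |((m + n : ℕ) : ℝ) - A ^ 2| ≤ C * A → P (A, m) := by
  rw [stirlingWindow, eventually_inf_principal, eventually_comap, eventually_atTop] at h
  obtain ⟨A₀, hA₀⟩ := h
  exact ⟨A₀, fun A hA m hm => hA₀ A hA (A, m) rfl hm⟩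

lemma tendsto_stirlingExponent_stirlingWindow :
    Tendsto (fun p : ℝ × ℕ => stirlingExponent n p.1 p.2) (stirlingWindow n C) (𝓝 0) := by
  refine squeeze_zero_norm' ?_ ((tendsto_const_nhds (x := 5 * (C + n) ^ 3 + (n : ℝ) ^ 2 +
    |(n : ℝ)| * (C + n))).div_atTop tendsto_fst_stirlingWindow)
  filter_upwards [eventually_abs_sq_sub_le_stirlingWindow, eventually_sq_div_two_le_stirlingWindow,
    tendsto_fst_stirlingWindow.eventually_gt_atTop 0,
    tendsto_fst_stirlingWindow.eventually_ge_atTop (4 * (C + n) + 1)] with p hB hx hA₀ hA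
  have hc : 0 ≤ C + n := nonneg_of_mul_nonneg_left ((abs_nonneg _).trans hB) hA₀
  exact abs_stirlingExponent_le hc hA hx hB

end stirlingWindow

lemma tendsto_sqrt_sqrt_pi_div_stirlingSeq :
    Tendsto (fun m : ℕ => √(√π / Stirling.stirlingSeq m)) atTop (𝓝 1) := by
  have h := ((tendsto_const_nhds (x := √π)).div Stirling.tendsto_stirlingSeq_sqrt_pi
    (sqrt_pos.2 pi_pos).ne').sqrt
  rwa [div_self (sqrt_pos.2 pi_pos).ne', sqrt_one] at h

lemma tendsto_one_add_div_rpow (a p : ℝ) :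
    Tendsto (fun m : ℕ => (1 + a / m) ^ p) atTop (𝓝 1) := by
  have h := ((tendsto_const_div_atTop_nhds_zero_nat a).const_add 1).rpow_const
    (p := p) (Or.inl (by norm_num))
  rwa [add_zero, one_rpow] at h

theorem isEquivalent_pow_div_sqrt_factorial_stirlingProfile (n : ℕ) (C : ℝ) :
    (fun p : ℝ × ℕ => p.1 ^ p.2 / √(p.2 ! : ℝ)) ~[stirlingWindow n C]
      fun p => stirlingProfile p.1 ((p.2 + n : ℕ) : ℝ) := by
  refine isEquivalent_of_tendsto_one ?_
  have h := ((tendsto_sqrt_sqrt_pi_div_stirlingSeq.comp tendsto_snd_stirlingWindow).mul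
    ((tendsto_one_add_div_rpow n (1 / 4)).comp tendsto_snd_stirlingWindow)).mul
    ((continuous_exp.tendsto 0).comp (tendsto_stirlingExponent_stirlingWindow (n := n) (C := C)))
  rw [exp_zero, mul_one, mul_one] at h
  refine h.congr' ?_
  filter_upwards [tendsto_fst_stirlingWindow.eventually_gt_atTop 0,
    tendsto_snd_stirlingWindow.eventually_ne_atTop 0] with p hA hm
  rw [Pi.div_apply, pow_div_sqrt_factorial_eq hA n hm, Nat.cast_add,
    mul_div_cancel_left₀ _ (stirlingProfile_pos _ (by positivity)).ne']
  rfl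

theorem stirling_asymptotic_general (n : ℕ) (C : ℝ) :
    ∀ ε : ℝ, 0 < ε → ∃ A₀ : ℝ, ∀ A : ℝ, A₀ ≤ A → ∀ J : ℕ, n ≤ J →
      |(J : ℝ) - A ^ 2| ≤ C * A →
      |A ^ (J - n) / Real.sqrt (Nat.factorial (J - n)) -
          (4 * Real.pi * ((J : ℝ) / 2)) ^ (-(1 / 4) : ℝ) *
            Real.exp (A ^ 2 / 2 - ((J : ℝ) - A ^ 2) ^ 2 / (4 * A ^ 2))|
        ≤ ε * ((4 * Real.pi * ((J : ℝ) / 2)) ^ (-(1 / 4) : ℝ) *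
            Real.exp (A ^ 2 / 2 - ((J : ℝ) - A ^ 2) ^ 2 / (4 * A ^ 2))) := by
  intro ε hε
  obtain ⟨A₀, hA₀⟩ := exists_forall_of_eventually_stirlingWindow
    ((isEquivalent_pow_div_sqrt_factorial_stirlingProfile n C).isLittleO.bound hε)
  refine ⟨A₀, fun A hA J hJ hJA => ?_⟩
  obtain ⟨m, rfl⟩ := Nat.exists_eq_add_of_le' hJ
  have h := hA₀ A hA m hJA
  rw [norm_eq_abs, norm_eq_abs, abs_of_nonneg (stirlingProfile_nonneg A (by positivity))] at h
  rwa [Nat.add_sub_cancel]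

/-- Stirling-type asymptotic: for fixed `n` and uniformly over `2j` with `|2j − A²| ≤ C·A`,
as `A → ∞`,
`A^{2j−n}/√((2j−n)!) = (4πj)^{-1/4} e^{A²/2 − (2j−A²)²/(4A²)} (1 + o(1))`.
Here `J = 2j ∈ ℕ`. -/
theorem stirling_asymptotic (n : ℕ) (C : ℝ) (hC : 0 < C) :
    ∀ ε : ℝ, 0 < ε → ∃ A₀ : ℝ, ∀ A : ℝ, A₀ ≤ A → ∀ J : ℕ, n ≤ J →
      |(J : ℝ) - A ^ 2| ≤ C * A →
      |A ^ (J - n) / Real.sqrt (Nat.factorial (J - n)) -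
          (4 * Real.pi * ((J : ℝ) / 2)) ^ (-(1 / 4) : ℝ) *
            Real.exp (A ^ 2 / 2 - ((J : ℝ) - A ^ 2) ^ 2 / (4 * A ^ 2))|
        ≤ ε * ((4 * Real.pi * ((J : ℝ) / 2)) ^ (-(1 / 4) : ℝ) *
            Real.exp (A ^ 2 / 2 - ((J : ℝ) - A ^ 2) ^ 2 / (4 * A ^ 2))) :=
  stirling_asymptotic_general n C
end

section
/- For a z-regular pure state ψ with Fock coefficients ψ_n = N c_n z^n/√(n!), |c_n| ≤ 1, and for r > 0, the state ψ' = e^{-r} exp(r a/z) ψ satisfies ‖ψ'‖² ≤ N² e^{z²}; moreover if ψ has integrable P-function P(β), then ψ' has P-function proportional to exp(2r(Re β / z − 1)) P(β), so ∫ exp(2r(Re β/z − 1)) P(β) d²β ≤ N² e^{z²} for all r > 0. -/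
/-!
Since `exp (w a) |β⟩ = e^{wβ} |β⟩`, the state `exp (w a) ψ` has `P`-function
`|e^{wβ}|² P(β) = e^{2 Re (wβ)} P(β)`. Concretely, expand `e^{wβ} e^{conj (wβ)}` as a double
series and integrate it term by term against `P(β) e^{-|β|²} |β|^{2p}`: the terms are dominated
by `|P|` times a geometric series, and the representation of `P` turns each of them into a
product `a_j conj a_k`, whose sum is `|√p! (exp (w a) ψ)_p|²`. Summing over `p` against
`e^{|β|²} = ∑ |β|^{2p}/p!` (dominated convergence) gives
`∫ e^{2 Re (wβ)} P = ‖exp (w a) ψ‖²`. For `w = r/z` this is `e^{2r} ‖ψ'‖²`, while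
`|c'_n| ≤ e^{-r} ∑ r^m/m! = 1` bounds `‖ψ'‖²` termwise by `N² ∑ z^{2n}/n! = N² e^{z²}`.
-/

open Complex MeasureTheory Nat Filter ComplexConjugate

lemma pow_div_factorial_le_half_pow_mul_exp {t : ℝ} (ht : 0 ≤ t) (j : ℕ) :
    t ^ j / j ! ≤ (1 / 2) ^ j * Real.exp (2 * t) := by
  have h := Real.pow_div_factorial_le_exp _ (mul_nonneg zero_le_two ht) j
  calc t ^ j / j ! = (1 / 2) ^ j * ((2 * t) ^ j / j !) := by
        rw [mul_pow, ← mul_div_assoc, ← mul_assoc, ← mul_pow]; norm_num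
    _ ≤ (1 / 2) ^ j * Real.exp (2 * t) := by gcongr

lemma exp_mul_sub_sq_mul_pow_le (a : ℝ) {t : ℝ} (ht : 0 ≤ t) (n : ℕ) :
    Real.exp (a * t - t ^ 2) * t ^ n ≤ n ! * Real.exp ((a + 1) ^ 2) := by
  have hpow : t ^ n ≤ n ! * Real.exp t := by
    have := Real.pow_div_factorial_le_exp _ ht n
    rwa [div_le_iff₀' (by positivity)] at this
  calc Real.exp (a * t - t ^ 2) * t ^ n ≤ Real.exp (a * t - t ^ 2) * (n ! * Real.exp t) := by
        gcongr
    _ = n ! * Real.exp ((a + 1) * t - t ^ 2) := by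
        rw [mul_left_comm, ← Real.exp_add]; ring_nf
    _ ≤ n ! * Real.exp ((a + 1) ^ 2) := by
        gcongr; nlinarith [sq_nonneg (a + 1 - t / 2)]

lemma hasSum_mul_exp_sub_sq_mul_pow_div_factorial (a u t : ℝ) :
    HasSum (fun p => a * Real.exp (u - t ^ 2) * t ^ (2 * p) / p !) (Real.exp u * a) := by
  have hexp : HasSum (fun p : ℕ => (t ^ 2) ^ p / p !) (Real.exp (t ^ 2)) := by
    rw [Real.exp_eq_exp_ℝ]; exact NormedSpace.expSeries_div_hasSum_exp _
  have h := hexp.mul_left (a * Real.exp (u - t ^ 2))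
  rw [mul_assoc, ← Real.exp_add, sub_add_cancel, mul_comm a (Real.exp u)] at h
  simpa only [pow_mul, mul_div_assoc] using h

lemma tsum_le_of_le_pow_div_factorial {f : ℕ → ℝ} (hf : ∀ n, 0 ≤ f n) (C x : ℝ)
    (h : ∀ n, f n ≤ C * x ^ n / n !) : ∑' n, f n ≤ C * Real.exp x := by
  have hC : HasSum (fun n : ℕ => C * x ^ n / n !) (C * Real.exp x) := by
    simpa only [mul_div_assoc] using
      (Real.exp_eq_exp_ℝ ▸ NormedSpace.expSeries_div_hasSum_exp x).mul_left C
  exact (Summable.tsum_le_tsum h (hC.summable.of_nonneg_of_le hf h) hC.summable).trans_eq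
    hC.tsum_eq

lemma summable_norm_of_norm_sq_le_geometric {a : ℕ → ℂ} {M : ℝ}
    (h : ∀ j, ‖a j‖ ^ 2 ≤ M * ((1 / 2) ^ j * (1 / 2) ^ j)) : Summable fun j => ‖a j‖ := by
  refine (summable_geometric_two.mul_left √M).of_nonneg_of_le (fun _ => norm_nonneg _)
    fun j => ?_
  rw [← Real.sqrt_mul_self (by positivity : (0 : ℝ) ≤ (1 / 2) ^ j),
    ← Real.sqrt_mul' _ (by positivity)]
  exact Real.le_sqrt_of_sq_le (h j)

lemma hasSum_mul_conj_of_summable_norm {a : ℕ → ℂ} (ha : Summable fun j => ‖a j‖) :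
    HasSum (fun jk : ℕ × ℕ => a jk.1 * conj (a jk.2)) ((‖∑' j, a j‖ ^ 2 : ℝ) : ℂ) := by
  have hconj : Summable fun k => ‖conj (a k)‖ := by simpa using ha
  have hprod := summable_mul_of_summable_norm ha hconj
  have hA : HasSum a (∑' j, a j) := ha.of_norm.hasSum
  have hB : HasSum (fun k => conj (a k)) (conj (∑' j, a j)) := hasSum_conj'.mpr hA
  rw [ofReal_pow, ← mul_conj']
  exact HasSum.mul (f := a) (g := fun k => conj (a k)) hA hB hprod

lemma norm_tsum_shift_mul_pow_div_factorial_le {c : ℕ → ℂ} (hc : ∀ n, ‖c n‖ ≤ 1) (w : ℂ)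
    (n : ℕ) : ‖∑' m : ℕ, c (n + m) * w ^ m / (m ! : ℂ)‖ ≤ Real.exp ‖w‖ := by
  refine tsum_of_norm_bounded (Real.exp_eq_exp_ℝ ▸ NormedSpace.expSeries_div_hasSum_exp ‖w‖)
    fun m => ?_
  rw [norm_div, norm_mul, norm_pow, norm_natCast]
  gcongr
  exact mul_le_of_le_one_left (by positivity) (hc _)

lemma norm_sq_fock_coeff (N z s : ℝ) (S : ℂ) (n : ℕ) :
    ‖(N : ℂ) * ((s : ℂ) * S) * (z : ℂ) ^ n / (√(n ! : ℝ) : ℂ)‖ ^ 2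
      = s ^ 2 * ‖(N : ℂ) * (z : ℂ) ^ n * S‖ ^ 2 / n ! := by
  simp only [norm_div, norm_mul, norm_pow, norm_real, Real.norm_eq_abs,
    abs_of_nonneg (Real.sqrt_nonneg _)]
  rw [div_pow, Real.sq_sqrt (by positivity)]
  simp only [mul_pow, sq_abs]
  ring

lemma norm_sq_fock_coeff_le {N z r : ℝ} {S : ℂ} (hS : ‖S‖ ≤ Real.exp r) (n : ℕ) :
    ‖(N : ℂ) * ((Real.exp (-r) : ℂ) * S) * (z : ℂ) ^ n / (√(n ! : ℝ) : ℂ)‖ ^ 2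
      ≤ N ^ 2 * (z ^ 2) ^ n / n ! := by
  have hS' : Real.exp (-r) * ‖S‖ ≤ 1 := by
    rw [Real.exp_neg]; exact inv_mul_le_one_of_le₀ hS (Real.exp_pos r).le
  rw [norm_sq_fock_coeff]
  refine div_le_div_of_nonneg_right ?_ (by positivity)
  calc Real.exp (-r) ^ 2 * ‖(N : ℂ) * (z : ℂ) ^ n * S‖ ^ 2
      = (|N| * |z| ^ n) ^ 2 * (Real.exp (-r) * ‖S‖) ^ 2 := by
        simp only [norm_mul, norm_pow, norm_real, Real.norm_eq_abs]; ring
    _ ≤ (|N| * |z| ^ n) ^ 2 * 1 ^ 2 := by gcongr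
    _ = N ^ 2 * (z ^ 2) ^ n := by
        rw [one_pow, mul_one, mul_pow, sq_abs, ← pow_mul, mul_comm n 2, pow_mul, sq_abs]

/-- `|ψ⟩⟨ψ| = ∫ P(β) |β⟩⟨β| d²β`, read off in the Fock basis through
`⟨m|β⟩ = e^{-|β|²/2} β^m / √m!`. -/
def IsPFunction (P : ℂ → ℝ) (ψ : ℕ → ℂ) : Prop :=
  ∀ m n : ℕ,
    (∫ β : ℂ, (P β : ℂ) * cexp (-((‖β‖ ^ 2 : ℝ) : ℂ)) * β ^ m * conj β ^ n /
        (√(m ! * n ! : ℝ) : ℂ)) = ψ m * conj (ψ n)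

/-- `√p!` times the `p`-th Fock coefficient of `exp (w a) ψ`, since `a |n⟩ = √n |n - 1⟩`. -/
noncomputable def expAnnihilationCoeff (ψ : ℕ → ℂ) (w : ℂ) (p : ℕ) : ℂ :=
  ∑' j : ℕ, w ^ j / j ! * (√((p + j)! : ℝ) : ℂ) * ψ (p + j)

/-- The `(j, k)` term of `e^{wβ} e^{conj (wβ)} P(β) e^{-|β|²} |β|^{2p}`. -/
noncomputable def expPairTerm (P : ℂ → ℝ) (w : ℂ) (p : ℕ) (jk : ℕ × ℕ) (β : ℂ) : ℂ :=
  (w * β) ^ jk.1 / jk.1 ! * (conj (w * β) ^ jk.2 / jk.2 !) *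
    ((P β * Real.exp (-‖β‖ ^ 2) * ‖β‖ ^ (2 * p) : ℝ) : ℂ)

lemma ofReal_mul_exp_neg_norm_sq_mul_pow (a : ℝ) (β : ℂ) (p : ℕ) :
    ((a * Real.exp (-‖β‖ ^ 2) * ‖β‖ ^ (2 * p) : ℝ) : ℂ)
      = a * cexp (-((‖β‖ ^ 2 : ℝ) : ℂ)) * β ^ p * conj β ^ p := by
  rw [mul_assoc _ (β ^ p), ← mul_pow, mul_conj', pow_mul]
  push_cast
  rfl

lemma hasSum_expPairTerm (P : ℂ → ℝ) (w : ℂ) (p : ℕ) (β : ℂ) :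
    HasSum (fun jk => expPairTerm P w p jk β)
      ((P β * Real.exp (2 * (w * β).re - ‖β‖ ^ 2) * ‖β‖ ^ (2 * p) : ℝ) : ℂ) := by
  have hexp (u : ℂ) : HasSum (fun n : ℕ => u ^ n / n !) (cexp u) := by
    rw [Complex.exp_eq_exp_ℂ]; exact NormedSpace.expSeries_div_hasSum_exp u
  have hsummable := summable_mul_of_summable_norm
    (NormedSpace.norm_expSeries_div_summable (w * β))
    (NormedSpace.norm_expSeries_div_summable (conj (w * β)))
  have hval : cexp (w * β) * cexp (conj (w * β)) *
        ((P β * Real.exp (-‖β‖ ^ 2) * ‖β‖ ^ (2 * p) : ℝ) : ℂ)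
      = ((P β * Real.exp (2 * (w * β).re - ‖β‖ ^ 2) * ‖β‖ ^ (2 * p) : ℝ) : ℂ) := by
    rw [← Complex.exp_add, add_conj, sub_eq_add_neg, Real.exp_add]
    push_cast
    ring
  rw [← hval]
  exact ((hexp _).mul (hexp _) hsummable).mul_right _

lemma norm_expPairTerm_le (P : ℂ → ℝ) (w : ℂ) (p : ℕ) (jk : ℕ × ℕ) (β : ℂ) :
    ‖expPairTerm P w p jk β‖
      ≤ (2 * p)! * Real.exp ((4 * ‖w‖ + 1) ^ 2) * ((1 / 2) ^ jk.1 * (1 / 2) ^ jk.2) * |P β| := by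
  obtain ⟨j, k⟩ := jk
  set t := ‖β‖
  have hwt : 0 ≤ ‖w‖ * t := by positivity
  have hnorm : ‖expPairTerm P w p (j, k) β‖ = (‖w‖ * t) ^ j / j ! * ((‖w‖ * t) ^ k / k !) *
      (|P β| * (Real.exp (-t ^ 2) * t ^ (2 * p))) := by
    simp only [expPairTerm, norm_mul, norm_div, norm_pow, RCLike.norm_conj, norm_natCast,
      norm_real, Real.norm_eq_abs, Real.abs_exp, abs_norm, t]
    ring
  calc ‖expPairTerm P w p (j, k) β‖
      ≤ (1 / 2) ^ j * Real.exp (2 * (‖w‖ * t)) * ((1 / 2) ^ k * Real.exp (2 * (‖w‖ * t))) *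
          (|P β| * (Real.exp (-t ^ 2) * t ^ (2 * p))) := by
        rw [hnorm]
        gcongr <;> exact pow_div_factorial_le_half_pow_mul_exp hwt _
    _ = Real.exp (4 * ‖w‖ * t - t ^ 2) * t ^ (2 * p) * ((1 / 2) ^ j * (1 / 2) ^ k) * |P β| := by
        rw [show 4 * ‖w‖ * t - t ^ 2 = 2 * (‖w‖ * t) + 2 * (‖w‖ * t) + -t ^ 2 by ring,
          Real.exp_add, Real.exp_add]
        ring
    _ ≤ (2 * p)! * Real.exp ((4 * ‖w‖ + 1) ^ 2) * ((1 / 2) ^ j * (1 / 2) ^ k) * |P β| := by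
        have := exp_mul_sub_sq_mul_pow_le (4 * ‖w‖) (norm_nonneg β) (2 * p)
        gcongr

lemma integrable_expPairTerm {P : ℂ → ℝ} (hP : Integrable P) (w : ℂ) (p : ℕ) (jk : ℕ × ℕ) :
    Integrable (expPairTerm P w p jk) := by
  refine Integrable.mono' (hP.abs.const_mul _) ?_
    (Eventually.of_forall (norm_expPairTerm_le P w p jk))
  have := hP.aestronglyMeasurable
  unfold expPairTerm
  fun_prop

lemma integral_expPairTerm {P : ℂ → ℝ} {ψ : ℕ → ℂ} (hPψ : IsPFunction P ψ)
    (w : ℂ) (p j k : ℕ) :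
    ∫ β, expPairTerm P w p (j, k) β
      = w ^ j / j ! * (√((p + j)! : ℝ) : ℂ) * ψ (p + j)
        * conj (w ^ k / k ! * (√((p + k)! : ℝ) : ℂ) * ψ (p + k)) := by
  have hterm : expPairTerm P w p (j, k) = fun β => w ^ j * conj w ^ k / (j ! * k !) *
      ((P β : ℂ) * cexp (-((‖β‖ ^ 2 : ℝ) : ℂ)) * β ^ (p + j) * conj β ^ (p + k)) := by
    funext β
    rw [expPairTerm, ofReal_mul_exp_neg_norm_sq_mul_pow]
    simp only [map_mul, mul_pow, pow_add]
    ring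
  have hmoment := hPψ (p + j) (p + k)
  rw [integral_div, div_eq_iff (ofReal_ne_zero.mpr (Real.sqrt_pos.mpr (by positivity)).ne')]
    at hmoment
  rw [hterm, integral_const_mul, hmoment, Real.sqrt_mul (by positivity)]
  simp only [map_mul, map_div₀, map_pow, conj_ofReal, map_natCast]
  push_cast
  ring

theorem integral_gaussianMoment_eq_norm_sq_expAnnihilationCoeff {P : ℂ → ℝ} {ψ : ℕ → ℂ}
    (hP : Integrable P) (hPψ : IsPFunction P ψ) (w : ℂ) (p : ℕ) :
    ∫ β, P β * Real.exp (2 * (w * β).re - ‖β‖ ^ 2) * ‖β‖ ^ (2 * p)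
      = ‖expAnnihilationCoeff ψ w p‖ ^ 2 := by
  set a : ℕ → ℂ := fun j => w ^ j / j ! * (√((p + j)! : ℝ) : ℂ) * ψ (p + j)
  set M := (2 * p)! * Real.exp ((4 * ‖w‖ + 1) ^ 2) * ∫ β, |P β|
  have hbound (jk : ℕ × ℕ) :
      ∫ β, ‖expPairTerm P w p jk β‖ ≤ M * ((1 / 2) ^ jk.1 * (1 / 2) ^ jk.2) := by
    calc ∫ β, ‖expPairTerm P w p jk β‖
        ≤ ∫ β, (2 * p)! * Real.exp ((4 * ‖w‖ + 1) ^ 2) * ((1 / 2) ^ jk.1 * (1 / 2) ^ jk.2)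
            * |P β| :=
          integral_mono (integrable_expPairTerm hP w p jk).norm (hP.abs.const_mul _)
            (norm_expPairTerm_le P w p jk)
      _ = M * ((1 / 2) ^ jk.1 * (1 / 2) ^ jk.2) := by rw [integral_const_mul]; ring
  have hsum : Summable fun jk : ℕ × ℕ => ∫ β, ‖expPairTerm P w p jk β‖ := by
    refine ((summable_mul_of_summable_norm (f := fun j : ℕ => ((1 : ℝ) / 2) ^ j)
      (g := fun k : ℕ => ((1 : ℝ) / 2) ^ k) ?_ ?_).mul_left M).of_nonneg_of_le
        (fun _ => integral_nonneg fun _ => norm_nonneg _) hbound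
    all_goals simpa using summable_geometric_two
  -- The diagonal terms `‖a j‖² = ∫ expPairTerm (j, j)` already force `a` to decay geometrically.
  have ha : Summable fun j => ‖a j‖ := by
    refine summable_norm_of_norm_sq_le_geometric (M := M) fun j => ?_
    have hdiag : ‖a j‖ ^ 2 = ‖∫ β, expPairTerm P w p (j, j) β‖ := by
      rw [integral_expPairTerm hPψ, mul_conj', norm_pow, norm_real, norm_norm]
    rw [hdiag]
    exact (norm_integral_le_integral_norm _).trans (hbound (j, j))
  have hL := hasSum_integral_of_summable_integral_norm (integrable_expPairTerm hP w p) hsum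
  simp only [(hasSum_expPairTerm P w p _).tsum_eq] at hL
  rw [integral_complex_ofReal] at hL
  have hR : HasSum (fun jk => ∫ β, expPairTerm P w p jk β)
      ((‖expAnnihilationCoeff ψ w p‖ ^ 2 : ℝ) : ℂ) := by
    have hterms : (fun jk : ℕ × ℕ => ∫ β, expPairTerm P w p jk β)
        = fun jk => a jk.1 * conj (a jk.2) :=
      funext fun jk => integral_expPairTerm hPψ w p jk.1 jk.2
    rw [hterms]
    exact hasSum_mul_conj_of_summable_norm ha
  exact_mod_cast hL.unique hR

theorem hasSum_norm_sq_expAnnihilationCoeff {P : ℂ → ℝ} {ψ : ℕ → ℂ} (hP : Integrable P)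
    (hPψ : IsPFunction P ψ) {w : ℂ} (hw : Integrable fun β => Real.exp (2 * (w * β).re) * P β) :
    HasSum (fun p => ‖expAnnihilationCoeff ψ w p‖ ^ 2 / p !)
      (∫ β, Real.exp (2 * (w * β).re) * P β) := by
  have hterm (p : ℕ) : ∫ β, P β * Real.exp (2 * (w * β).re - ‖β‖ ^ 2) * ‖β‖ ^ (2 * p) / p !
      = ‖expAnnihilationCoeff ψ w p‖ ^ 2 / p ! := by
    rw [integral_div, integral_gaussianMoment_eq_norm_sq_expAnnihilationCoeff hP hPψ]
  simp only [← hterm]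
  refine hasSum_integral_of_dominated_convergence
    (fun p β => |P β| * Real.exp (2 * (w * β).re - ‖β‖ ^ 2) * ‖β‖ ^ (2 * p) / p !)
    (fun p => by have := hP.aestronglyMeasurable; fun_prop) (fun p => ?_)
    (Eventually.of_forall fun β =>
      (hasSum_mul_exp_sub_sq_mul_pow_div_factorial _ _ ‖β‖).summable) ?_
    (Eventually.of_forall fun β => hasSum_mul_exp_sub_sq_mul_pow_div_factorial _ _ ‖β‖)
  · refine Eventually.of_forall fun β => le_of_eq ?_
    rw [Real.norm_eq_abs, abs_div, abs_mul, abs_mul, Real.abs_exp, abs_pow, abs_norm,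
      Nat.abs_cast]
  · simp only [(hasSum_mul_exp_sub_sq_mul_pow_div_factorial _ _ _).tsum_eq]
    refine hw.abs.congr (Eventually.of_forall fun β => ?_)
    simp only [abs_mul, Real.abs_exp]

lemma expAnnihilationCoeff_div_eq {c ψ : ℕ → ℂ} {N z : ℂ} (hz : z ≠ 0)
    (hψ : ∀ n, ψ n = N * c n * z ^ n / (√(n ! : ℝ) : ℂ)) (w : ℂ) (p : ℕ) :
    expAnnihilationCoeff ψ (w / z) p = N * z ^ p * ∑' m : ℕ, c (p + m) * w ^ m / (m ! : ℂ) := by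
  rw [expAnnihilationCoeff, ← tsum_mul_left]
  refine tsum_congr fun j => ?_
  have hsqrt : (√((p + j)! : ℝ) : ℂ) ≠ 0 :=
    ofReal_ne_zero.mpr (Real.sqrt_pos.mpr (by positivity)).ne'
  rw [hψ, pow_add, div_pow]
  field_simp

theorem zRegular_S_norm_and_P_bound_general (c : ℕ → ℂ) (hc : ∀ n, ‖c n‖ ≤ 1)
    (N z r : ℝ) (hz : 0 < z) (hr : 0 < r)
    (ψ : ℕ → ℂ)
    (hψ : ∀ n, ψ n = (N : ℂ) * c n * (z : ℂ) ^ n / (Real.sqrt (Nat.factorial n) : ℂ))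
    (ψ' : ℕ → ℂ)
    (hψ' : ∀ n, ψ' n =
      (N : ℂ) * ((Real.exp (-r) : ℂ) * ∑' m : ℕ, c (n + m) * (r : ℂ) ^ m /
          (Nat.factorial m : ℂ)) * (z : ℂ) ^ n / (Real.sqrt (Nat.factorial n) : ℂ))
    (P : ℂ → ℝ) (hPint : Integrable P)
    (hrep : ∀ m n : ℕ,
      (∫ β : ℂ, (P β : ℂ) * Complex.exp (-((‖β‖ ^ 2 : ℝ) : ℂ)) * β ^ m *
          (starRingEnd ℂ β) ^ n / (Real.sqrt (Nat.factorial m * Nat.factorial n) : ℂ))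
        = ψ m * starRingEnd ℂ (ψ n))
    (hwint : Integrable (fun β : ℂ => Real.exp (2 * r * (β.re / z - 1)) * P β)) :
    (∑' n : ℕ, ‖ψ' n‖ ^ 2) ≤ N ^ 2 * Real.exp (z ^ 2) ∧
      (∫ β : ℂ, Real.exp (2 * r * (β.re / z - 1)) * P β) ≤ N ^ 2 * Real.exp (z ^ 2) := by
  set w : ℂ := (r : ℂ) / (z : ℂ) with hw
  have hweight (β : ℂ) : Real.exp (2 * r * (β.re / z - 1)) * P β
      = Real.exp (-r) ^ 2 * (Real.exp (2 * (w * β).re) * P β) := by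
    rw [hw, ← ofReal_div, re_ofReal_mul, ← mul_assoc, sq, ← Real.exp_add, ← Real.exp_add]
    congr 2
    field_simp
    ring
  have hS (n : ℕ) : ‖∑' m : ℕ, c (n + m) * (r : ℂ) ^ m / (m ! : ℂ)‖ ≤ Real.exp r := by
    simpa [abs_of_pos hr] using norm_tsum_shift_mul_pow_div_factorial_le hc (r : ℂ) n
  have hψ'_sq (n : ℕ) :
      ‖ψ' n‖ ^ 2 = Real.exp (-r) ^ 2 * (‖expAnnihilationCoeff ψ w n‖ ^ 2 / n !) := by
    rw [hψ' n, norm_sq_fock_coeff, expAnnihilationCoeff_div_eq (ofReal_ne_zero.mpr hz.ne') hψ,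
      mul_div_assoc]
  have hsum : HasSum (fun n => ‖ψ' n‖ ^ 2) (∫ β, Real.exp (2 * r * (β.re / z - 1)) * P β) := by
    simp only [hψ'_sq, hweight, integral_const_mul]
    refine (hasSum_norm_sq_expAnnihilationCoeff hPint hrep ?_).mul_left _
    refine (hwint.const_mul (Real.exp r ^ 2)).congr (Eventually.of_forall fun β => ?_)
    dsimp only
    rw [hweight, ← mul_assoc, ← mul_pow, ← Real.exp_add, add_neg_cancel, Real.exp_zero, one_pow,
      one_mul]
  have hbound : ∑' n, ‖ψ' n‖ ^ 2 ≤ N ^ 2 * Real.exp (z ^ 2) :=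
    tsum_le_of_le_pow_div_factorial (fun _ => by positivity) _ _ fun n =>
      hψ' n ▸ norm_sq_fock_coeff_le (hS n) n
  exact ⟨hbound, hsum.tsum_eq ▸ hbound⟩

/-- For a `z`-regular pure state `ψ` with Fock coefficients `ψ_n = N c_n z^n/√(n!)`,
`|c_n| ≤ 1`, and `r > 0`, the state `ψ' = e^{-r} exp(r a/z) ψ` (with coefficients
`ψ'_n = N c'_n z^n/√(n!)`, `c'_n = e^{-r} Σ_m c_{n+m} r^m/m!`) satisfies
`‖ψ'‖² ≤ N² e^{z²}`.  Moreover, if `ψ` has an integrable `P`-function `P(β)`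
(expressed through its coherent-state matrix elements
`ψ_m ψ̄_n = ∫ P(β) e^{−|β|²} β^m β̄^n/√(m!n!) d²β`), then `ψ'` has `P`-function
proportional to `exp(2r(Re β/z − 1)) P(β)`, so
`∫ exp(2r(Re β/z − 1)) P(β) d²β ≤ N² e^{z²}` for that `r`. -/
theorem zRegular_S_norm_and_P_bound (c : ℕ → ℂ) (hc : ∀ n, ‖c n‖ ≤ 1)
    (N z r : ℝ) (hN : 0 < N) (hz : 0 < z) (hr : 0 < r)
    (ψ : ℕ → ℂ)
    (hψ : ∀ n, ψ n = (N : ℂ) * c n * (z : ℂ) ^ n / (Real.sqrt (Nat.factorial n) : ℂ))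
    (ψ' : ℕ → ℂ)
    (hψ' : ∀ n, ψ' n =
      (N : ℂ) * ((Real.exp (-r) : ℂ) * ∑' m : ℕ, c (n + m) * (r : ℂ) ^ m /
          (Nat.factorial m : ℂ)) * (z : ℂ) ^ n / (Real.sqrt (Nat.factorial n) : ℂ))
    (P : ℂ → ℝ) (hPint : Integrable P)
    (hrep : ∀ m n : ℕ,
      (∫ β : ℂ, (P β : ℂ) * Complex.exp (-((‖β‖ ^ 2 : ℝ) : ℂ)) * β ^ m *
          (starRingEnd ℂ β) ^ n / (Real.sqrt (Nat.factorial m * Nat.factorial n) : ℂ))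
        = ψ m * starRingEnd ℂ (ψ n))
    (hwint : Integrable (fun β : ℂ => Real.exp (2 * r * (β.re / z - 1)) * P β)) :
    (∑' n : ℕ, ‖ψ' n‖ ^ 2) ≤ N ^ 2 * Real.exp (z ^ 2) ∧
      (∫ β : ℂ, Real.exp (2 * r * (β.re / z - 1)) * P β) ≤ N ^ 2 * Real.exp (z ^ 2) :=
  zRegular_S_norm_and_P_bound_general c hc N z r hz hr ψ hψ ψ' hψ' P hPint hrep hwint
end
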